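/- Let R be a commutative ring with unity, I ⊊ R and J ⊆ R a pair of co-maximal ideals with I contained in only finitely many maximal ideals. Let k ∈ ℕ ∪ {0} and (a_0,a_1,…,a_k) ∈ R^{k+1} be a unital vector, i.e. (a_0)+(a_1)+⋯+(a_k) = R. Then for any index 0 ≤ i ≤ k there exist x_0,…,x_{i-1} ∈ J and x_{i+1},…,x_k ∈ R such that the element Σ_{j=0}^{i-1} x_j a_j + a_i + Σ_{j=i+1}^{k} x_j a_j is a unit modulo I. -/
import Mathlib


/-- Let `R` be a commutative ring with unity, `I ⊊ R`, `J ⊆ R` co-maximal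
ideals with `I` contained in only finitely many maximal ideals. Let `(a_0, …, a_k)` be a
unital vector. Then for any index `i` there exist `x_0, …, x_{i-1} ∈ J` and
`x_{i+1}, …, x_k ∈ R` such that `Σ_{j<i} x_j a_j + a_i + Σ_{j>i} x_j a_j` is a unit
modulo `I`. -/
theorem exists_unit_combination {R : Type*} [CommRing R] (I J : Ideal R) (hI : I ≠ ⊤)
    (hfin : {M : Ideal R | M.IsMaximal ∧ I ≤ M}.Finite)
    (hcomax : I + J = ⊤)
    (k : ℕ) (a : Fin (k + 1) → R)
    (ha : ∑ j, Ideal.span {a j} = ⊤)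
    (i : Fin (k + 1)) :
    ∃ x : Fin (k + 1) → R, x i = 1 ∧ (∀ j, j < i → x j ∈ J) ∧
      IsUnit (Ideal.Quotient.mk I (∑ j, x j * a j)) := by
  classical
  set S := hfin.toFinset with hS
  have hmemS : ∀ {M : Ideal R}, M ∈ S ↔ M.IsMaximal ∧ I ≤ M := by
    intro M; simp [hS, Set.Finite.mem_toFinset]
  -- decompose 1 = u + v with u ∈ I, v ∈ J
  obtain ⟨u, hu, v, hv, huv⟩ : ∃ u ∈ I, ∃ v ∈ J, u + v = 1 :=
    Ideal.isCoprime_iff_exists.mp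
      (Ideal.isCoprime_iff_add.mpr (by rw [hcomax, Ideal.one_eq_top]))
  -- for each maximal ideal in S there is an index j with a j ∉ M
  have hex : ∀ M ∈ S, ∃ j, a j ∉ M := by
    intro M hM
    have hMmax := (hmemS.mp hM).1
    by_contra h
    push_neg at h
    have hle : (⊤ : Ideal R) ≤ M := by
      rw [← ha, Ideal.sum_eq_sup]
      exact Finset.sup_le fun j _ => Ideal.span_le.mpr (by simpa using h j)
    exact hMmax.ne_top (top_le_iff.mp hle)
  -- CRT idempotent-like elements
  have hekey : ∀ M : Ideal R, ∃ e : R,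
      M ∈ S → (e - 1 ∈ M ∧ ∀ M' ∈ S, M' ≠ M → e ∈ M') := by
    intro M
    by_cases hM : M ∈ S
    · have hMmax := (hmemS.mp hM).1
      have hcop : ∀ M' ∈ S.erase M, IsCoprime M M' := fun M' hM' =>
        Ideal.isCoprime_iff_sup_eq.mpr
          (hMmax.coprime_of_ne (hmemS.mp (Finset.mem_of_mem_erase hM')).1
            (Ne.symm (Finset.ne_of_mem_erase hM')))
      obtain ⟨u', hu', e, he, hue⟩ :=
        Ideal.isCoprime_iff_exists.mp (Ideal.isCoprime_biInf hcop)
      refine ⟨e, fun _ => ⟨?_, ?_⟩⟩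
      · have h1 : e - 1 = -u' := by linear_combination hue
        rw [h1]; exact M.neg_mem hu'
      · intro M' hM' hne
        have := Ideal.mem_iInf.mp he M'
        have := Ideal.mem_iInf.mp this (Finset.mem_erase.mpr ⟨hne, hM'⟩)
        exact this
    · exact ⟨0, fun h => absurd h hM⟩
  choose e he using hekey
  -- choose indices p M with a (p M) ∉ M when a i ∈ M
  have hjkey : ∀ M : Ideal R, ∃ jM : Fin (k + 1), M ∈ S → a jM ∉ M := by
    intro M
    by_cases hM : M ∈ S
    · obtain ⟨j, hj⟩ := hex M hM
      exact ⟨j, fun _ => hj⟩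
    · exact ⟨i, fun h => absurd h hM⟩
  choose p hp using hjkey
  set T := S.filter (fun M => a i ∈ M) with hT
  -- key: p M ≠ i for M ∈ T
  have hpne : ∀ M ∈ T, p M ≠ i := by
    intro M hM hcontra
    obtain ⟨hMS, hai⟩ := Finset.mem_filter.mp hM
    exact hp M hMS (hcontra ▸ hai)
  set c : Fin (k + 1) → R := fun j => ∑ M ∈ T.filter (fun M => p M = j), e M with hc
  set x : Fin (k + 1) → R := fun j => if j = i then 1 else v * c j with hx
  set b : R := a i + ∑ M ∈ T, e M * a (p M) with hb
  have hxi : x i = 1 := by simp [hx]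
  refine ⟨x, hxi, ?_, ?_⟩
  · intro j hj
    have hji : j ≠ i := ne_of_lt hj
    simp only [hx, if_neg hji]
    exact J.mul_mem_right _ hv
  -- sum equals a i + v * (fiberwise sum)
  have hsum : ∑ j, x j * a j = a i + v * ∑ M ∈ T, e M * a (p M) := by
    rw [← Finset.sum_fiberwise_of_maps_to (g := p) (fun M _ => Finset.mem_univ (p M))
      (fun M => e M * a (p M))]
    have : ∀ j : Fin (k + 1),
        ∑ M ∈ T.filter (fun M => p M = j), e M * a (p M) = c j * a j := by
      intro j
      rw [hc, Finset.sum_mul]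
      exact Finset.sum_congr rfl fun M hM => by
        rw [(Finset.mem_filter.mp hM).2]
    simp_rw [this]
    have hci : c i = 0 := by
      rw [hc]
      have hemp : T.filter (fun M => p M = i) = ∅ :=
        Finset.filter_eq_empty_iff.mpr (fun {M} hM => hpne M hM)
      simp [hemp]
    rw [Finset.mul_sum, Fintype.sum_eq_add_sum_compl i (fun j => x j * a j),
      Fintype.sum_eq_add_sum_compl i (fun j => v * (c j * a j)), hxi, one_mul, hci]
    simp only [mul_zero, zero_mul, add_zero, zero_add]
    congr 1
    refine Finset.sum_congr rfl fun j hj => ?_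
    have hji : j ≠ i := by simpa using hj
    simp [hx, if_neg hji, mul_assoc]
  -- the sum is congruent to b mod I
  have hcong : Ideal.Quotient.mk I (∑ j, x j * a j) = Ideal.Quotient.mk I b := by
    rw [Ideal.Quotient.eq, hsum, hb]
    have : a i + v * ∑ M ∈ T, e M * a (p M) - (a i + ∑ M ∈ T, e M * a (p M))
        = -u * ∑ M ∈ T, e M * a (p M) := by
      have h1 : v - 1 = -u := by linear_combination huv
      ring_nf
      linear_combination (∑ M ∈ T, e M * a (p M)) * h1
    rw [this]
    exact I.mul_mem_right _ (I.neg_mem hu)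
  rw [hcong]
  -- b is not in any maximal ideal containing I
  have hbnot : ∀ M ∈ S, b ∉ M := by
    intro M hMS hbM
    by_cases hai : a i ∈ M
    · have hMT : M ∈ T := Finset.mem_filter.mpr ⟨hMS, hai⟩
      have hsplit : ∑ M' ∈ T, e M' * a (p M') =
          e M * a (p M) + ∑ M' ∈ T.erase M, e M' * a (p M') :=
        (Finset.add_sum_erase T _ hMT).symm
      have herase : ∑ M' ∈ T.erase M, e M' * a (p M') ∈ M := by
        refine Ideal.sum_mem M fun M' hM' => Ideal.mul_mem_right _ M ?_
        have hM'S : M' ∈ S :=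
          (Finset.mem_filter.mp (Finset.mem_of_mem_erase hM')).1
        exact (he M' hM'S).2 M hMS (Ne.symm (Finset.ne_of_mem_erase hM'))
      have h1 : e M * a (p M) ∈ M := by
        have : e M * a (p M) = b - a i - ∑ M' ∈ T.erase M, e M' * a (p M') := by
          rw [hb, hsplit]; ring
        rw [this]
        exact M.sub_mem (M.sub_mem hbM hai) herase
      have h2 : a (p M) ∈ M := by
        have : a (p M) = e M * a (p M) - (e M - 1) * a (p M) := by ring
        rw [this]
        exact M.sub_mem h1 (Ideal.mul_mem_right _ M (he M hMS).1)
      exact hp M hMS h2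
    · have hsumM : ∑ M' ∈ T, e M' * a (p M') ∈ M := by
        refine Ideal.sum_mem M fun M' hM' => Ideal.mul_mem_right _ M ?_
        obtain ⟨hM'S, hai'⟩ := Finset.mem_filter.mp hM'
        have hne : M ≠ M' := by rintro rfl; exact hai hai'
        exact (he M' hM'S).2 M hMS hne
      have : a i ∈ M := by
        have : a i = b - ∑ M' ∈ T, e M' * a (p M') := by rw [hb]; ring
        rw [this]; exact M.sub_mem hbM hsumM
      exact hai this
  -- conclude b is a unit mod I
  by_contra hnu
  obtain ⟨Mq, hMqmax, hmem⟩ := exists_max_ideal_of_mem_nonunits hnu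
  haveI := hMqmax
  have hMmax : (Mq.comap (Ideal.Quotient.mk I)).IsMaximal :=
    Ideal.comap_isMaximal_of_surjective _ Ideal.Quotient.mk_surjective
  have hIle : I ≤ Mq.comap (Ideal.Quotient.mk I) := by
    intro y hy
    simp only [Ideal.mem_comap, Ideal.Quotient.eq_zero_iff_mem.mpr hy]
    exact Mq.zero_mem
  exact hbnot _ (hmemS.mpr ⟨hMmax, hIle⟩) hmem
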